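/- Let P > 0, let u : ℝ → ℝ be twice continuously differentiable and periodic with period 2P, let A, Ĉ, D̂, U be real constants with A ≠ 0, suppose for all θ both A·u'(θ)² = 2D̂ + 2Ĉ·u(θ) + U·u(θ)² − (1/3)u(θ)³ and A·u''(θ) = Ĉ + U·u(θ) − (1/2)u(θ)², and let d = (1/(2P))∫_{−P}^{P} u(θ) dθ. Then (1/(2P))∫_{−P}^{P} A²·u''(θ)² dθ = (1/7)·(6D̂d + 8Ĉ² + U(−6D̂ + 6Ĉd + 2UĈ + 2U²d)). -/

import Mathlib

/-!
Integrating the exact derivative `(u' uⁿ)' = u'' uⁿ + n uⁿ⁻¹ u'²` over a period gives zero.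
Multiplying by `A` and substituting both integral relations turns this, for `n = 0, 1, 2`, into
three linear relations between the moments `Mₖ = ∫ uᵏ`, `k ≤ 4`. Since `A² u''² = (Ĉ + U u − u²/2)²`
is a quartic in `u`, its integral is a combination of the same moments, and eliminating
`M₂, M₃, M₄` leaves an expression in `M₀ = 2P` and `M₁ = 2P d` alone.
-/

open intervalIntegral Function

theorem Function.Periodic.deriv {f : ℝ → ℝ} {T : ℝ} (hf : Periodic f T) :
    Periodic (deriv f) T := fun x => by
  rw [← deriv_comp_add_const, show (fun y => f (y + T)) = f from funext hf]

theorem Function.Periodic.intervalIntegral_deriv_eq_zero {g g' : ℝ → ℝ} {T : ℝ} (a : ℝ)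
    (hg : Periodic g T) (hderiv : ∀ x, HasDerivAt g (g' x) x)
    (hint : IntervalIntegrable g' MeasureTheory.volume a (a + T)) :
    ∫ x in a..a + T, g' x = 0 := by
  rw [integral_eq_sub_of_hasDerivAt (fun x _ => hderiv x) hint, hg, sub_self]

section PeriodicSolution

variable {u : ℝ → ℝ} {P : ℝ}

theorem integral_deriv_deriv_mul_pow_add_eq_zero (hu : ContDiff ℝ 2 u)
    (hper : Periodic u (2 * P)) (n : ℕ) :
    ∫ θ in (-P)..P,
      (deriv (deriv u) θ * u θ ^ n + deriv u θ * (n * u θ ^ (n - 1) * deriv u θ)) = 0 := by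
  have hu' : ContDiff ℝ 1 (deriv u) := hu.deriv'
  have hc : Continuous u := hu.continuous
  have hc' : Continuous (deriv u) := hu'.continuous
  have hc'' : Continuous (deriv (deriv u)) := hu'.continuous_deriv le_rfl
  have hg : Periodic (fun θ => deriv u θ * u θ ^ n) (2 * P) := fun x => by
    simp only [hper x, hper.deriv x]
  have h := hg.intervalIntegral_deriv_eq_zero (-P)
    (fun x => (hu'.differentiable one_ne_zero x).hasDerivAt.mul
      ((hu.differentiable two_ne_zero x).hasDerivAt.pow n))
    ((by fun_prop : Continuous _).intervalIntegrable _ _)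
  rwa [show -P + 2 * P = P by ring] at h

variable {A C D U : ℝ}

theorem integral_moment_recurrence (hu : ContDiff ℝ 2 u) (hper : Periodic u (2 * P))
    (hfirst : ∀ θ : ℝ, A * (deriv u θ) ^ 2 =
      2 * D + 2 * C * u θ + U * (u θ) ^ 2 - (1 / 3) * (u θ) ^ 3)
    (hsecond : ∀ θ : ℝ, A * deriv (deriv u) θ = C + U * u θ - (1 / 2) * (u θ) ^ 2) (n : ℕ) :
    2 * n * D * (∫ θ in (-P)..P, u θ ^ (n - 1)) + (2 * n + 1) * C * (∫ θ in (-P)..P, u θ ^ n)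
      + (n + 1) * U * (∫ θ in (-P)..P, u θ ^ (n + 1))
      - (2 * n + 3) / 6 * (∫ θ in (-P)..P, u θ ^ (n + 2)) = 0 := by
  have hsubst : ∀ θ,
      A * (deriv (deriv u) θ * u θ ^ n + deriv u θ * (n * u θ ^ (n - 1) * deriv u θ)) =
        2 * n * D * u θ ^ (n - 1) + (2 * n + 1) * C * u θ ^ n + (n + 1) * U * u θ ^ (n + 1)
          - (2 * n + 3) / 6 * u θ ^ (n + 2) := fun θ => by
    rcases n with _ | m
    · simp only [CharP.cast_eq_zero, zero_tsub, pow_zero]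
      linear_combination hsecond θ
    · simp only [Nat.add_sub_cancel]
      push_cast
      linear_combination u θ ^ (m + 1) * hsecond θ + (m + 1) * u θ ^ m * hfirst θ
  have hc : Continuous u := hu.continuous
  have h := congrArg (A * ·) (integral_deriv_deriv_mul_pow_add_eq_zero hu hper n)
  simp only [← integral_const_mul, hsubst, mul_zero] at h
  rwa [integral_sub, integral_add, integral_add, integral_const_mul, integral_const_mul,
    integral_const_mul, integral_const_mul] at h
  all_goals exact (by fun_prop : Continuous _).intervalIntegrable _ _

theorem integral_sq_mul_deriv_deriv (hu : Continuous u)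
    (hsecond : ∀ θ : ℝ, A * deriv (deriv u) θ = C + U * u θ - (1 / 2) * (u θ) ^ 2) (a b : ℝ) :
    ∫ θ in a..b, A ^ 2 * (deriv (deriv u) θ) ^ 2 =
      C ^ 2 * (b - a) + 2 * C * U * (∫ θ in a..b, u θ) + (U ^ 2 - C) * (∫ θ in a..b, u θ ^ 2)
        - U * (∫ θ in a..b, u θ ^ 3) + 1 / 4 * (∫ θ in a..b, u θ ^ 4) := by
  have hsubst : ∀ θ, A ^ 2 * (deriv (deriv u) θ) ^ 2 = C ^ 2 + 2 * C * U * u θ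
      + (U ^ 2 - C) * u θ ^ 2 - U * u θ ^ 3 + 1 / 4 * u θ ^ 4 := fun θ => by
    rw [← mul_pow, hsecond]
    ring
  simp only [hsubst]
  rw [integral_add, integral_sub, integral_add, integral_add, integral_const, integral_const_mul,
    integral_const_mul, integral_const_mul, integral_const_mul, smul_eq_mul, mul_comm (b - a)]
  all_goals exact (by fun_prop : Continuous _).intervalIntegrable _ _

end PeriodicSolution

theorem stmt_4 (P : ℝ) (hP : 0 < P) (u : ℝ → ℝ) (A C D U d : ℝ)
    (hu : ContDiff ℝ 2 u) (hper : Function.Periodic u (2 * P))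
    (hfirst : ∀ θ : ℝ, A * (deriv u θ) ^ 2 =
      2 * D + 2 * C * u θ + U * (u θ) ^ 2 - (1 / 3) * (u θ) ^ 3)
    (hsecond : ∀ θ : ℝ, A * deriv (deriv u) θ = C + U * u θ - (1 / 2) * (u θ) ^ 2)
    (hd : d = (1 / (2 * P)) * ∫ θ in (-P)..P, u θ) :
    (1 / (2 * P)) * ∫ θ in (-P)..P, A ^ 2 * (deriv (deriv u) θ) ^ 2 =
      (1 / 7) * (6 * D * d + 8 * C ^ 2 +
        U * (-6 * D + 6 * C * d + 2 * U * C + 2 * U ^ 2 * d)) := by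
  have rec₀ := integral_moment_recurrence hu hper hfirst hsecond 0
  have rec₁ := integral_moment_recurrence hu hper hfirst hsecond 1
  have rec₂ := integral_moment_recurrence hu hper hfirst hsecond 2
  norm_num at rec₀ rec₁ rec₂
  rw [integral_sq_mul_deriv_deriv hu.continuous hsecond, hd]
  field_simp
  linear_combination -6 * rec₂ + 12 * U * rec₁ - 4 * (2 * U ^ 2 + C) * rec₀
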